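/- Let ω_max, T > 0 and let μ satisfy 0 < μ < min(1/(4·T·ω_max), T·ω_max/4). Let ω : ℝ → ℝ³ be continuous with |ω(s)| ≤ ω_max, and let a : ℝ → ℝ³ be differentiable with |a(s)| = 1 and a'(s) = a(s) × ω(s) for all s. Let x ∈ ℝ³ be a unit vector and t ∈ ℝ such that (1/T)·∫_t^{t+T} (a(s)ᵀx)² ds ≥ 1 − μ. Then the function s ↦ a(s)ᵀx has constant (strict) sign on [t, t+T], and there is σ ∈ {+1, −1} such that |a(s) − σ·x|² ≤ 4·√(T·ω_max·μ) for all s ∈ [t, t+T]. -/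

import Mathlib

open Matrix

noncomputable section

/-- Cross product on ℝ³. -/
def cross3 (x y : Fin 3 → ℝ) : Fin 3 → ℝ :=
  ![x 1 * y 2 - x 2 * y 1, x 2 * y 0 - x 0 * y 2, x 0 * y 1 - x 1 * y 0]

/-- Euclidean norm on ℝ³. -/
def enorm3 (x : Fin 3 → ℝ) : ℝ := Real.sqrt (∑ i, (x i) ^ 2)

/-! The function `f s = a s ⬝ᵥ x` satisfies `|f| ≤ 1` and is `ωmax`-Lipschitz, since
`|f'| = |(a × ω) ⬝ᵥ x| ≤ |a| |ω| |x|`. Hence `g = 1 - |f|` is a nonnegative `ωmax`-Lipschitz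
function with `∫ g ≤ ∫ (1 - f²) ≤ μ T`. If `g` takes the value `δ` somewhere, it is at least
`δ / 2` on a window of length `δ / (2 ωmax)`; the bound `μ < T ωmax / 4` makes this window fit
into `[t, t + T]`, so `δ² / (4 ωmax) ≤ μ T`, i.e. `δ ≤ 2 √(T ωmax μ) < 1`. Thus `f` never vanishes,
has a constant sign `σ`, and `|a - σ x|² = 2 - 2 |f| ≤ 4 √(T ωmax μ)`. -/

open Set Filter WithLp
open scoped NNReal

lemma le_integral_of_lipschitzWith {g : ℝ → ℝ} {K : ℝ≥0} (hg : LipschitzWith K g)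
    (hg0 : ∀ s, 0 ≤ g s) {t T s L : ℝ} (hs : s ∈ Icc t (t + T)) (hL0 : 0 ≤ L) (hLT : L ≤ T / 2) :
    L * (g s - K * L) ≤ ∫ r in t..t + T, g r := by
  obtain ⟨u, htu, huT, hsu⟩ : ∃ u, t ≤ u ∧ u + L ≤ t + T ∧ s ∈ Icc u (u + L) := by
    rcases le_total s (t + T / 2) with h | h
    · exact ⟨s, hs.1, by linarith, le_rfl, by linarith⟩
    · exact ⟨s - L, by linarith, by linarith [hs.2], by linarith, by linarith⟩
  have hbound : ∀ r ∈ Icc u (u + L), g s - K * L ≤ g r := by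
    intro r hr
    have hsr : |s - r| ≤ L :=
      abs_sub_le_iff.2 ⟨by linarith [hr.1, hsu.2], by linarith [hr.2, hsu.1]⟩
    have h := hg.dist_le_mul s r
    rw [Real.dist_eq, Real.dist_eq] at h
    nlinarith [le_abs_self (g s - g r), K.2]
  calc L * (g s - K * L) = ∫ _ in u..u + L, (g s - K * L) := by simp; ring
    _ ≤ ∫ r in u..u + L, g r := intervalIntegral.integral_mono_on (by linarith)
          intervalIntegrable_const (hg.continuous.intervalIntegrable _ _) hbound
    _ ≤ ∫ r in t..t + T, g r := intervalIntegral.integral_mono_interval htu (by linarith) huT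
          (Eventually.of_forall hg0) (hg.continuous.intervalIntegrable _ _)

lemma le_two_sqrt_of_lipschitzWith_of_integral_le {g : ℝ → ℝ} {K : ℝ≥0} (hg : LipschitzWith K g)
    (hg0 : ∀ s, 0 ≤ g s) (hK : 0 < K) {t T μ : ℝ} (hT : 0 < T) (hμ : μ < T * K / 4)
    (hint : ∫ r in t..t + T, g r ≤ μ * T) {s : ℝ} (hs : s ∈ Icc t (t + T)) :
    g s ≤ 2 * √(T * K * μ) := by
  have hK' : (0 : ℝ) < K := hK
  have hsmall : g s ≤ K * T := by
    by_contra! h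
    have := le_integral_of_lipschitzWith hg hg0 hs (L := T / 2) (by positivity) le_rfl
    nlinarith
  -- `L = g s / (2 K)` maximises `L * (g s - K * L)`.
  have hwindow := le_integral_of_lipschitzWith hg hg0 hs (L := g s / (2 * K))
    (div_nonneg (hg0 s) (by positivity)) (by rw [div_le_iff₀ (by positivity)]; linarith)
  have hsq : (g s / 2) ^ 2 ≤ T * K * μ := by
    field_simp at hwindow
    nlinarith
  linarith [(Real.le_sqrt (by linarith [hg0 s]) (by nlinarith [hg0 s])).2 hsq]

lemma enorm3_eq_norm_toLp (x : Fin 3 → ℝ) : enorm3 x = ‖toLp 2 x‖ := by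
  simp [enorm3, EuclideanSpace.norm_eq]

lemma abs_dotProduct_le_norm_toLp {ι : Type*} [Fintype ι] (u v : ι → ℝ) :
    |u ⬝ᵥ v| ≤ ‖toLp 2 u‖ * ‖toLp 2 v‖ := by
  simpa [EuclideanSpace.inner_eq_star_dotProduct, mul_comm] using
    abs_real_inner_le_norm (toLp 2 v) (toLp 2 u)

lemma norm_toLp_crossProduct_le (u v : Fin 3 → ℝ) :
    ‖toLp 2 (u ⨯₃ v)‖ ≤ ‖toLp 2 u‖ * ‖toLp 2 v‖ := by
  rw [InnerProductGeometry.norm_toLp_symm_crossProduct]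
  exact mul_le_of_le_one_right (by positivity) (Real.sin_le_one _)

lemma norm_toLp_sub_smul_sq {ι : Type*} [Fintype ι] {u v : ι → ℝ} (hu : ‖toLp 2 u‖ = 1)
    (hv : ‖toLp 2 v‖ = 1) {σ : ℝ} (hσ : |σ| = 1) :
    ‖toLp 2 (u - σ • v)‖ ^ 2 = 2 - 2 * σ * (u ⬝ᵥ v) := by
  rw [toLp_sub, toLp_smul, norm_sub_sq_real, norm_smul, real_inner_smul_right, hu, hv,
    Real.norm_eq_abs, hσ, EuclideanSpace.inner_eq_star_dotProduct]
  simp [dotProduct_comm]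
  ring

lemma HasDerivAt.dotProduct_const {ι : Type*} [Fintype ι] {a : ℝ → ι → ℝ} {a' : ι → ℝ} {s : ℝ}
    (h : HasDerivAt a a' s) (x : ι → ℝ) : HasDerivAt (fun τ => a τ ⬝ᵥ x) (a' ⬝ᵥ x) s := by
  simpa [dotProduct] using HasDerivAt.fun_sum fun i _ => (hasDerivAt_pi.mp h i).mul_const (x i)

lemma lipschitzWith_dotProduct_of_hasDerivAt_cross {a ω : ℝ → Fin 3 → ℝ} {K : ℝ≥0}
    (ha : ∀ s, ‖toLp 2 (a s)‖ ≤ 1) (hω : ∀ s, ‖toLp 2 (ω s)‖ ≤ K)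
    (had : ∀ s, HasDerivAt a (a s ⨯₃ ω s) s) {x : Fin 3 → ℝ} (hx : ‖toLp 2 x‖ ≤ 1) :
    LipschitzWith K (fun s => a s ⬝ᵥ x) := by
  have hbound : ∀ s, ‖(a s ⨯₃ ω s) ⬝ᵥ x‖ ≤ K := fun s => calc
    ‖(a s ⨯₃ ω s) ⬝ᵥ x‖ ≤ ‖toLp 2 (a s ⨯₃ ω s)‖ * ‖toLp 2 x‖ := abs_dotProduct_le_norm_toLp _ _
    _ ≤ ‖toLp 2 (a s)‖ * ‖toLp 2 (ω s)‖ * 1 := by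
      gcongr
      exact norm_toLp_crossProduct_le _ _
    _ ≤ 1 * K * 1 := by gcongr; exacts [ha s, hω s]
    _ = K := by ring
  refine LipschitzWith.of_dist_le_mul fun u v => ?_
  simpa [Real.dist_eq] using convex_univ.norm_image_sub_le_of_norm_hasDerivWithin_le
    (fun s _ => ((had s).dotProduct_const x).hasDerivWithinAt) (fun s _ => hbound s)
    (mem_univ v) (mem_univ u)

lemma LipschitzWith.const_sub_abs {f : ℝ → ℝ} {K : ℝ≥0} (hf : LipschitzWith K f) (c : ℝ) :
    LipschitzWith K (fun s => c - |f s|) := by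
  simpa using (LipschitzWith.const c).sub (lipschitzWith_one_norm.comp hf)

lemma integral_one_sub_abs_le {f : ℝ → ℝ} (hf : Continuous f) (hf1 : ∀ s, |f s| ≤ 1) {a b : ℝ}
    (hab : a ≤ b) : ∫ s in a..b, (1 - |f s|) ≤ (b - a) - ∫ s in a..b, f s ^ 2 := by
  have hf2 : ∀ s, f s ^ 2 ≤ |f s| := fun s => by
    nlinarith [sq_abs (f s), abs_nonneg (f s), hf1 s]
  calc ∫ s in a..b, (1 - |f s|) ≤ ∫ s in a..b, (1 - f s ^ 2) :=
        intervalIntegral.integral_mono_on hab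
          ((by fun_prop : Continuous _).intervalIntegrable _ _)
          ((by fun_prop : Continuous _).intervalIntegrable _ _)
          fun s _ => by linarith [hf2 s]
    _ = (b - a) - ∫ s in a..b, f s ^ 2 := by
      rw [intervalIntegral.integral_sub intervalIntegrable_const
        ((hf.fun_pow 2).intervalIntegrable _ _)]
      simp

theorem measurement_close_to_fixed_vector
    (ωmax T μ : ℝ) (hωmax : 0 < ωmax) (hT : 0 < T)
    (hμ1 : μ < min (1 / (4 * T * ωmax)) (T * ωmax / 4))
    (ω : ℝ → Fin 3 → ℝ) (hωb : ∀ s, enorm3 (ω s) ≤ ωmax)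
    (a : ℝ → Fin 3 → ℝ) (hau : ∀ s, enorm3 (a s) = 1)
    (had : ∀ s, HasDerivAt a (cross3 (a s) (ω s)) s)
    (x : Fin 3 → ℝ) (hx : enorm3 x = 1) (t : ℝ)
    (hint : 1 - μ ≤ (1 / T) * ∫ s in t..(t + T), (a s ⬝ᵥ x) ^ 2) :
    ((∀ s ∈ Set.Icc t (t + T), 0 < a s ⬝ᵥ x) ∨ (∀ s ∈ Set.Icc t (t + T), a s ⬝ᵥ x < 0)) ∧
      ∃ σ : ℝ, (σ = 1 ∨ σ = -1) ∧
        ∀ s ∈ Set.Icc t (t + T), enorm3 (a s - σ • x) ^ 2 ≤ 4 * Real.sqrt (T * ωmax * μ) := by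
  obtain ⟨hμ_inv, hμ_lt⟩ := lt_min_iff.mp hμ1
  simp only [enorm3_eq_norm_toLp] at hωb hau hx ⊢
  set f := fun s => a s ⬝ᵥ x
  let K : ℝ≥0 := ⟨ωmax, hωmax.le⟩
  have hf_lip : LipschitzWith K f :=
    lipschitzWith_dotProduct_of_hasDerivAt_cross (fun s => (hau s).le) hωb had hx.le
  have hf_le : ∀ s, |f s| ≤ 1 := fun s => by
    simpa [hau s, hx] using abs_dotProduct_le_norm_toLp (a s) x
  have hdefect : ∫ s in t..t + T, (1 - |f s|) ≤ μ * T := by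
    have := integral_one_sub_abs_le hf_lip.continuous hf_le (a := t) (b := t + T) (by linarith)
    rw [div_mul_eq_mul_div, one_mul, le_div_iff₀ hT] at hint
    linarith
  have hclose : ∀ s ∈ Icc t (t + T), 1 - |f s| ≤ 2 * √(T * ωmax * μ) := fun s hs =>
    le_two_sqrt_of_lipschitzWith_of_integral_le (hf_lip.const_sub_abs 1)
      (fun s => sub_nonneg.2 (hf_le s)) hωmax hT hμ_lt hdefect hs
  have hsqrt : 2 * √(T * ωmax * μ) < 1 := by
    have h : T * ωmax * μ < (1 / 2) ^ 2 := by
      rw [lt_div_iff₀ (by positivity)] at hμ_inv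
      nlinarith
    linarith [(Real.sqrt_lt' (by norm_num)).2 h]
  rcases isPreconnected_Icc.mapsTo_Ioi_or_Iio hf_lip.continuous.continuousOn
    (fun s hs hs0 => by linarith [hclose s hs, abs_eq_zero.2 hs0]) with hpos | hneg
  · refine ⟨Or.inl hpos, 1, Or.inl rfl, fun s hs => ?_⟩
    rw [norm_toLp_sub_smul_sq (hau s) hx abs_one]
    linarith [hclose s hs, abs_of_pos (mem_Ioi.1 (hpos hs))]
  · refine ⟨Or.inr hneg, -1, Or.inr rfl, fun s hs => ?_⟩
    rw [norm_toLp_sub_smul_sq (hau s) hx (by simp)]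
    linarith [hclose s hs, abs_of_neg (mem_Iio.1 (hneg hs))]

end
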